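/- arXiv:2510.04432 — 2 statements merged into one kernel-verified Lean document; each statement's English description precedes it below -/
import Mathlib

section
/- Let n, d ≥ 1, let f be an integer with 0 ≤ f < n/2, let κ ≥ 0, and let A : (ℝ^d)ⁿ → ℝ^d be an (f,κ)-robust aggregator. Let 𝓗 ⊆ {1,…,n} with |𝓗| = n − f, and for each k ∈ 𝓗 let ℓ_k : ℝ^d → ℝ be L-smooth (L > 0); set ℓ_𝓗 = (1/|𝓗|)∑_{k∈𝓗} ℓ_k and assume (1/|𝓗|)∑_{k∈𝓗}‖∇ℓ_k(w') − ∇ℓ_𝓗(w')‖² ≤ G² for all w'. Let γ > 0 and H ≥ 1 satisfy L²γ²H(H−1) ≤ 1/2, fix w ∈ ℝ^d, define for each k ∈ 𝓗 the local sequence v_{k,0} = w, v_{k,h+1} = v_{k,h} − γ∇ℓ_k(v_{k,h}), and set Δ = (1/|𝓗|)∑_{k∈𝓗}(v_{k,H} − w). Let u₁,…,u_n ∈ ℝ^d be any vectors with u_k = v_{k,H} for every k ∈ 𝓗, and let w⁺ = w + A(u₁ − w, …, u_n − w). Then ‖w⁺ − w − Δ‖² ≤ 3κH²γ²G²(1 +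 8L²H(H−1)γ²) + 24κL²H³(H−1)γ⁴‖∇ℓ_𝓗(w)‖². -/
/-!
Since the mean minimizes the sum of squared distances, robustness bounds the error by
`(κ/|𝓗|) ∑_k ‖x_k - c‖²` for any centre `c`; take `c = -γH ∇ℓ_𝓗(w)`, the centralized `H`-step
update. Then `x_k - c = -γ ∑_h (∇ℓ_k(v_{k,h}) - ∇ℓ_𝓗(w))`, which smoothness controls by the
client drift `∑_k ‖v_{k,h} - w‖²` and the heterogeneity `G²`. The drift obeys a discrete
Grönwall-type recursion whose feedback factor is at most `3/4` when `L²γ²H(H-1) ≤ 1/2`.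
-/

open Finset

/-- An aggregator `A : (ℝ^d)^n → ℝ^d` is `(f,κ)`-robust if for all inputs `x₁, …, x_n`
and every `S ⊆ {1,…,n}` with `|S| = n - f`, writing `x̄_S` for the average over `S`,
`‖A x - x̄_S‖² ≤ (κ/|S|) ∑_{i∈S} ‖x_i - x̄_S‖²`. -/
def IsRobust (n d fq : ℕ) (κ : ℝ)
    (A : (Fin n → EuclideanSpace ℝ (Fin d)) → EuclideanSpace ℝ (Fin d)) : Prop :=
  ∀ (x : Fin n → EuclideanSpace ℝ (Fin d)) (S : Finset (Fin n)), S.card = n - fq →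
    ‖A x - (S.card : ℝ)⁻¹ • ∑ i ∈ S, x i‖ ^ 2
      ≤ κ / (S.card : ℝ) * ∑ i ∈ S, ‖x i - (S.card : ℝ)⁻¹ • ∑ j ∈ S, x j‖ ^ 2

section Averaging

variable {ι E : Type*}

lemma norm_sum_sq_le_card_mul_sum_norm_sq [SeminormedAddCommGroup E] (s : Finset ι)
    (y : ι → E) : ‖∑ i ∈ s, y i‖ ^ 2 ≤ #s * ∑ i ∈ s, ‖y i‖ ^ 2 :=
  (pow_le_pow_left₀ (norm_nonneg _) (norm_sum_le s y) 2).trans sq_sum_le_card_mul_sum_sq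

lemma sum_norm_sub_average_sq_le [NormedAddCommGroup E] [InnerProductSpace ℝ E]
    (s : Finset ι) (x : ι → E) (c : E) :
    ∑ i ∈ s, ‖x i - (#s : ℝ)⁻¹ • ∑ j ∈ s, x j‖ ^ 2 ≤ ∑ i ∈ s, ‖x i - c‖ ^ 2 := by
  rcases s.eq_empty_or_nonempty with rfl | hs
  · simp
  set μ := (#s : ℝ)⁻¹ • ∑ j ∈ s, x j
  have hcentered : ∑ i ∈ s, (x i - μ) = 0 := by
    rw [sum_sub_distrib, sum_const, ← Nat.cast_smul_eq_nsmul ℝ, smul_smul,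
      mul_inv_cancel₀ (by positivity), one_smul, sub_self]
  have hexpand (i : ι) :
      ‖x i - c‖ ^ 2 = ‖x i - μ‖ ^ 2 + 2 * inner ℝ (x i - μ) (μ - c) + ‖μ - c‖ ^ 2 := by
    rw [← norm_add_sq_real, sub_add_sub_cancel]
  have hcross : ∑ i ∈ s, inner ℝ (x i - μ) (μ - c) = 0 := by
    rw [← sum_inner, hcentered, inner_zero_left]
  rw [sum_congr rfl fun i _ => hexpand i, sum_add_distrib, sum_add_distrib, ← mul_sum, hcross]
  linarith [sum_nonneg fun i (_ : i ∈ s) => sq_nonneg ‖μ - c‖]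

end Averaging

lemma sq_le_two_mul_add_sq {x a b : ℝ} (hx : 0 ≤ x) (h : x ≤ a + b) :
    x ^ 2 ≤ 2 * (a ^ 2 + b ^ 2) :=
  (pow_le_pow_left₀ hx h 2).trans add_sq_le

lemma sq_le_three_mul_add_sq {x a b c : ℝ} (hx : 0 ≤ x) (h : x ≤ a + b + c) :
    x ^ 2 ≤ 3 * (a ^ 2 + b ^ 2 + c ^ 2) := by
  nlinarith [sq_nonneg (a - b), sq_nonneg (b - c), sq_nonneg (a - c)]

section Lipschitz

variable {E : Type*} [SeminormedAddCommGroup E] {F : E → E} {L : ℝ} {v w : E}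

lemma norm_sub_sq_le_of_norm_sub_le (hF : ‖F v - F w‖ ≤ L * ‖v - w‖) (g : E) :
    ‖F v - g‖ ^ 2 ≤ 2 * (L ^ 2 * ‖v - w‖ ^ 2 + ‖F w - g‖ ^ 2) := by
  rw [← mul_pow]
  refine sq_le_two_mul_add_sq (norm_nonneg _) ?_
  calc ‖F v - g‖ = ‖(F v - F w) + (F w - g)‖ := by rw [sub_add_sub_cancel]
    _ ≤ L * ‖v - w‖ + ‖F w - g‖ := (norm_add_le _ _).trans (by gcongr)

lemma norm_sq_le_of_norm_sub_le (hF : ‖F v - F w‖ ≤ L * ‖v - w‖) (g : E) :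
    ‖F v‖ ^ 2 ≤ 3 * (L ^ 2 * ‖v - w‖ ^ 2 + ‖F w - g‖ ^ 2 + ‖g‖ ^ 2) := by
  rw [← mul_pow]
  refine sq_le_three_mul_add_sq (norm_nonneg _) ?_
  calc ‖F v‖ = ‖(F v - F w) + (F w - g) + g‖ := by rw [sub_add_sub_cancel, sub_add_cancel]
    _ ≤ L * ‖v - w‖ + ‖F w - g‖ + ‖g‖ := (norm_add₃_le).trans (by gcongr)

end Lipschitz

section Iterates

variable {E : Type*} [NormedAddCommGroup E] [NormedSpace ℝ E] {v d : ℕ → E} {γ : ℝ}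

lemma iterate_sub_add_smul_eq (hv : ∀ j, v (j + 1) = v j - γ • d j) (g : E) (h : ℕ) :
    v h - v 0 + (γ * h) • g = -(γ • ∑ j ∈ range h, (d j - g)) := by
  induction h with
  | zero => simp
  | succ h ih =>
    rw [hv, sum_range_succ, smul_add, neg_add, ← ih]
    push_cast
    module

lemma norm_iterate_sub_add_smul_sq_le (hv : ∀ j, v (j + 1) = v j - γ • d j) (g : E) (h : ℕ) :
    ‖v h - v 0 + (γ * h) • g‖ ^ 2 ≤ γ ^ 2 * h * ∑ j ∈ range h, ‖d j - g‖ ^ 2 := by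
  rw [iterate_sub_add_smul_eq hv, norm_neg, norm_smul, mul_pow, Real.norm_eq_abs, sq_abs,
    mul_assoc]
  gcongr
  simpa using norm_sum_sq_le_card_mul_sum_norm_sq (range h) (fun j => d j - g)

end Iterates

lemma sum_range_natCast_mul_two (H : ℕ) : (∑ h ∈ range H, (h : ℝ)) * 2 = H * (H - 1) := by
  induction H with
  | zero => simp
  | succ H ih =>
    rw [sum_range_succ, add_mul, ih]
    push_cast
    ring

lemma natCast_mul_natCast_sub_one_nonneg (H : ℕ) : 0 ≤ (H : ℝ) * (H - 1) := by
  rw [← sum_range_natCast_mul_two]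
  positivity

lemma sum_range_le_of_le_mul_sum_range {D : ℕ → ℝ} {a b : ℝ} {H : ℕ} (hD0 : ∀ h, 0 ≤ D h)
    (ha : 0 ≤ a) (hb : 0 ≤ b)
    (hD : ∀ h < H, D h ≤ a * h * ∑ j ∈ range h, D j + b * h ^ 2)
    (haH : a * H * (H - 1) ≤ 3 / 2) :
    ∑ h ∈ range H, D h ≤ 2 * b * H ^ 2 * (H - 1) := by
  set T := ∑ h ∈ range H, D h
  have hT0 : 0 ≤ T := sum_nonneg fun h _ => hD0 h
  have hsq : ∑ h ∈ range H, (h : ℝ) ^ 2 ≤ H * ∑ h ∈ range H, (h : ℝ) := by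
    rw [mul_sum]
    gcongr with h hh
    rw [sq]
    gcongr
    exact (mem_range.1 hh).le
  have hT : T ≤ a * (∑ h ∈ range H, (h : ℝ)) * T + b * ∑ h ∈ range H, (h : ℝ) ^ 2 := by
    calc T ≤ ∑ h ∈ range H, (a * h * T + b * h ^ 2) := by
          refine sum_le_sum fun h hh => (hD h (mem_range.1 hh)).trans ?_
          gcongr
          exact sum_le_sum_of_subset_of_nonneg (range_subset_range.2 (mem_range.1 hh).le)
            fun j _ _ => hD0 j
      _ = _ := by rw [sum_add_distrib, ← sum_mul, ← mul_sum, ← mul_sum]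
  have hgauss : ∑ h ∈ range H, (h : ℝ) = H * (H - 1) / 2 := by
    linarith [sum_range_natCast_mul_two H]
  rw [hgauss] at hT hsq
  linarith [mul_le_mul_of_nonneg_right haH hT0, mul_le_mul_of_nonneg_left hsq hb]

section LocalSteps

variable {ι E : Type*} [NormedAddCommGroup E] [NormedSpace ℝ E] {s : Finset ι} {F : ι → E → E}
  {v : ι → ℕ → E} {L γ : ℝ} {w : E}

lemma sum_norm_iterate_sub_sq_le (hF : ∀ k ∈ s, ∀ x, ‖F k x - F k w‖ ≤ L * ‖x - w‖)
    (hv0 : ∀ k ∈ s, v k 0 = w) (hv : ∀ k ∈ s, ∀ h, v k (h + 1) = v k h - γ • F k (v k h))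
    (g : E) (h : ℕ) :
    ∑ k ∈ s, ‖v k h - w‖ ^ 2 ≤ 3 * γ ^ 2 * L ^ 2 * h * ∑ j ∈ range h, ∑ k ∈ s, ‖v k j - w‖ ^ 2
      + 3 * γ ^ 2 * (∑ k ∈ s, (‖F k w - g‖ ^ 2 + ‖g‖ ^ 2)) * h ^ 2 := by
  calc ∑ k ∈ s, ‖v k h - w‖ ^ 2
      ≤ ∑ k ∈ s, γ ^ 2 * h * ∑ j ∈ range h,
          3 * (L ^ 2 * ‖v k j - w‖ ^ 2 + ‖F k w - g‖ ^ 2 + ‖g‖ ^ 2) := by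
        gcongr with k hk
        have hk_drift := norm_iterate_sub_add_smul_sq_le (hv k hk) 0 h
        simp only [smul_zero, add_zero, sub_zero, hv0 k hk] at hk_drift
        refine hk_drift.trans ?_
        gcongr with j
        exact norm_sq_le_of_norm_sub_le (hF k hk _) g
    _ = ∑ k ∈ s, (3 * γ ^ 2 * L ^ 2 * h * ∑ j ∈ range h, ‖v k j - w‖ ^ 2
          + 3 * γ ^ 2 * (‖F k w - g‖ ^ 2 + ‖g‖ ^ 2) * h ^ 2) := by
        refine sum_congr rfl fun k _ => ?_
        simp only [← mul_sum, mul_add, sum_add_distrib, sum_const, card_range, nsmul_eq_mul]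
        ring
    _ = _ := by rw [sum_add_distrib, ← mul_sum, ← sum_mul, ← mul_sum, sum_comm]

lemma sum_range_sum_norm_iterate_sub_sq_le (hF : ∀ k ∈ s, ∀ x, ‖F k x - F k w‖ ≤ L * ‖x - w‖)
    (hv0 : ∀ k ∈ s, v k 0 = w) (hv : ∀ k ∈ s, ∀ h, v k (h + 1) = v k h - γ • F k (v k h))
    (g : E) {H : ℕ} (hstep : L ^ 2 * γ ^ 2 * H * (H - 1) ≤ 1 / 2) :
    ∑ h ∈ range H, ∑ k ∈ s, ‖v k h - w‖ ^ 2
      ≤ 6 * γ ^ 2 * (∑ k ∈ s, (‖F k w - g‖ ^ 2 + ‖g‖ ^ 2)) * H ^ 2 * (H - 1) := by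
  have hsum := sum_range_le_of_le_mul_sum_range (H := H)
    (fun h => sum_nonneg fun k _ => sq_nonneg _) (by positivity) (by positivity)
    (fun h _ => sum_norm_iterate_sub_sq_le hF hv0 hv g h) (by linarith)
  linarith

lemma sum_norm_iterate_sub_add_smul_sq_le (hF : ∀ k ∈ s, ∀ x, ‖F k x - F k w‖ ≤ L * ‖x - w‖)
    (hv0 : ∀ k ∈ s, v k 0 = w) (hv : ∀ k ∈ s, ∀ h, v k (h + 1) = v k h - γ • F k (v k h))
    (g : E) (H : ℕ) :
    ∑ k ∈ s, ‖v k H - w + (γ * H) • g‖ ^ 2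
      ≤ 2 * γ ^ 2 * H * (L ^ 2 * ∑ h ∈ range H, ∑ k ∈ s, ‖v k h - w‖ ^ 2
        + H * ∑ k ∈ s, ‖F k w - g‖ ^ 2) := by
  calc ∑ k ∈ s, ‖v k H - w + (γ * H) • g‖ ^ 2
      ≤ ∑ k ∈ s, γ ^ 2 * H * ∑ h ∈ range H, 2 * (L ^ 2 * ‖v k h - w‖ ^ 2 + ‖F k w - g‖ ^ 2) := by
        gcongr with k hk
        rw [← hv0 k hk]
        refine (norm_iterate_sub_add_smul_sq_le (hv k hk) g H).trans ?_
        gcongr with h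
        rw [hv0 k hk]
        exact norm_sub_sq_le_of_norm_sub_le (hF k hk _) g
    _ = ∑ k ∈ s, (2 * γ ^ 2 * H * L ^ 2 * ∑ h ∈ range H, ‖v k h - w‖ ^ 2
          + 2 * γ ^ 2 * H * H * ‖F k w - g‖ ^ 2) := by
        refine sum_congr rfl fun k _ => ?_
        simp only [← mul_sum, mul_add, sum_add_distrib, sum_const, card_range, nsmul_eq_mul]
        ring
    _ = _ := by
        rw [sum_add_distrib, ← mul_sum, ← mul_sum, sum_comm]
        ring

lemma sum_norm_iterate_sub_add_smul_sq_le_card_mul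
    (hF : ∀ k ∈ s, ∀ x, ‖F k x - F k w‖ ≤ L * ‖x - w‖)
    (hv0 : ∀ k ∈ s, v k 0 = w) (hv : ∀ k ∈ s, ∀ h, v k (h + 1) = v k h - γ • F k (v k h))
    {g : E} {G : ℝ} (hB : ∑ k ∈ s, ‖F k w - g‖ ^ 2 ≤ #s * G ^ 2)
    {H : ℕ} (hstep : L ^ 2 * γ ^ 2 * H * (H - 1) ≤ 1 / 2) :
    ∑ k ∈ s, ‖v k H - w + (γ * H) • g‖ ^ 2
      ≤ #s * (2 * γ ^ 2 * H ^ 2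
        * (G ^ 2 + 6 * L ^ 2 * γ ^ 2 * H * (H - 1) * (G ^ 2 + ‖g‖ ^ 2))) := by
  have hC : ∑ k ∈ s, (‖F k w - g‖ ^ 2 + ‖g‖ ^ 2) ≤ #s * (G ^ 2 + ‖g‖ ^ 2) := by
    rw [sum_add_distrib, sum_const, nsmul_eq_mul]
    linarith
  have hdrift : ∑ h ∈ range H, ∑ k ∈ s, ‖v k h - w‖ ^ 2
      ≤ 6 * γ ^ 2 * (#s * (G ^ 2 + ‖g‖ ^ 2)) * H ^ 2 * (H - 1) := by
    refine (sum_range_sum_norm_iterate_sub_sq_le hF hv0 hv g hstep).trans ?_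
    nlinarith [mul_le_mul_of_nonneg_right hC
      (mul_nonneg (by positivity : 0 ≤ 6 * γ ^ 2 * H) (natCast_mul_natCast_sub_one_nonneg H))]
  calc _ ≤ _ := sum_norm_iterate_sub_add_smul_sq_le hF hv0 hv g H
    _ ≤ 2 * γ ^ 2 * H * (L ^ 2 * (6 * γ ^ 2 * (#s * (G ^ 2 + ‖g‖ ^ 2)) * H ^ 2 * (H - 1))
        + H * (#s * G ^ 2)) := by gcongr
    _ = _ := by ring

end LocalSteps

lemma IsRobust.norm_sub_average_sq_le {n d f : ℕ} {κ : ℝ}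
    {A : (Fin n → EuclideanSpace ℝ (Fin d)) → EuclideanSpace ℝ (Fin d)}
    (hA : IsRobust n d f κ A) (hκ : 0 ≤ κ) (x : Fin n → EuclideanSpace ℝ (Fin d))
    {S : Finset (Fin n)} (hS : #S = n - f) (c : EuclideanSpace ℝ (Fin d)) :
    ‖A x - (#S : ℝ)⁻¹ • ∑ i ∈ S, x i‖ ^ 2 ≤ κ / #S * ∑ i ∈ S, ‖x i - c‖ ^ 2 :=
  (hA x S hS).trans <| mul_le_mul_of_nonneg_left (sum_norm_sub_average_sq_le S x c)
    (by positivity)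

theorem stmt_16_general (n d f : ℕ) (hf : 2 * f < n)
    (κ : ℝ) (hκ : 0 ≤ κ)
    (A : (Fin n → EuclideanSpace ℝ (Fin d)) → EuclideanSpace ℝ (Fin d))
    (hA : IsRobust n d f κ A)
    (𝓗 : Finset (Fin n)) (h𝓗 : 𝓗.card = n - f)
    (ℓ : Fin n → EuclideanSpace ℝ (Fin d) → ℝ) (L G : ℝ)
    (hsmooth : ∀ k ∈ 𝓗, ∀ w w' : EuclideanSpace ℝ (Fin d),
      ‖gradient (ℓ k) w' - gradient (ℓ k) w‖ ≤ L * ‖w' - w‖)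
    (lH : EuclideanSpace ℝ (Fin d) → ℝ)
    (hhetero : ∀ w' : EuclideanSpace ℝ (Fin d),
      (𝓗.card : ℝ)⁻¹ * ∑ k ∈ 𝓗, ‖gradient (ℓ k) w' - gradient lH w'‖ ^ 2 ≤ G ^ 2)
    (γ : ℝ) (H : ℕ)
    (hstep : L ^ 2 * γ ^ 2 * (H : ℝ) * ((H : ℝ) - 1) ≤ 1 / 2)
    (w : EuclideanSpace ℝ (Fin d)) (v : Fin n → ℕ → EuclideanSpace ℝ (Fin d))
    (hv0 : ∀ k ∈ 𝓗, v k 0 = w)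
    (hrec : ∀ k ∈ 𝓗, ∀ h : ℕ, v k (h + 1) = v k h - γ • gradient (ℓ k) (v k h))
    (Δ : EuclideanSpace ℝ (Fin d))
    (hΔ : Δ = (𝓗.card : ℝ)⁻¹ • ∑ k ∈ 𝓗, (v k H - w))
    (u : Fin n → EuclideanSpace ℝ (Fin d)) (hu : ∀ k ∈ 𝓗, u k = v k H)
    (wplus : EuclideanSpace ℝ (Fin d)) (hwp : wplus = w + A (fun k => u k - w)) :
    ‖wplus - w - Δ‖ ^ 2
      ≤ 3 * κ * (H : ℝ) ^ 2 * γ ^ 2 * G ^ 2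
          * (1 + 8 * L ^ 2 * (H : ℝ) * ((H : ℝ) - 1) * γ ^ 2)
        + 24 * κ * L ^ 2 * (H : ℝ) ^ 3 * ((H : ℝ) - 1) * γ ^ 4
          * ‖gradient lH w‖ ^ 2 := by
  set g := gradient lH w
  set x : Fin n → EuclideanSpace ℝ (Fin d) := fun k => u k - w
  have hm : (0 : ℝ) < #𝓗 := by
    rw [h𝓗]
    exact_mod_cast Nat.sub_pos_of_lt (by omega)
  have hx (k) (hk : k ∈ 𝓗) : x k = v k H - w := congrArg (· - w) (hu k hk)
  have herr : wplus - w - Δ = A x - (#𝓗 : ℝ)⁻¹ • ∑ k ∈ 𝓗, x k := by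
    rw [hwp, hΔ, sum_congr rfl hx]
    abel
  have hB : ∑ k ∈ 𝓗, ‖gradient (ℓ k) w - g‖ ^ 2 ≤ #𝓗 * G ^ 2 :=
    (inv_mul_le_iff₀ hm).1 (hhetero w)
  rw [herr]
  calc ‖A x - (#𝓗 : ℝ)⁻¹ • ∑ k ∈ 𝓗, x k‖ ^ 2
      ≤ κ / #𝓗 * ∑ k ∈ 𝓗, ‖x k - -((γ * H) • g)‖ ^ 2 := hA.norm_sub_average_sq_le hκ x h𝓗 _
    _ = κ / #𝓗 * ∑ k ∈ 𝓗, ‖v k H - w + (γ * H) • g‖ ^ 2 := by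
        rw [sum_congr rfl fun k hk => by rw [sub_neg_eq_add, hx k hk]]
    _ ≤ κ / #𝓗 * (#𝓗 * (2 * γ ^ 2 * H ^ 2
          * (G ^ 2 + 6 * L ^ 2 * γ ^ 2 * H * (H - 1) * (G ^ 2 + ‖g‖ ^ 2)))) := by
        gcongr
        exact sum_norm_iterate_sub_add_smul_sq_le_card_mul (fun k hk y => hsmooth k hk w y)
          hv0 hrec hB hstep
    _ = κ * (2 * γ ^ 2 * H ^ 2
          * (G ^ 2 + 6 * L ^ 2 * γ ^ 2 * H * (H - 1) * (G ^ 2 + ‖g‖ ^ 2))) := by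
        field_simp
    _ ≤ _ := by
        -- the slack is `κγ²H²G² + 12κL²γ⁴H²·H(H-1)(G² + ‖g‖²)`
        nlinarith [mul_nonneg (mul_nonneg hκ (by positivity :
          0 ≤ L ^ 2 * γ ^ 4 * H ^ 2 * (G ^ 2 + ‖g‖ ^ 2))) (natCast_mul_natCast_sub_one_nonneg H),
          mul_nonneg hκ (by positivity : 0 ≤ γ ^ 2 * H ^ 2 * G ^ 2)]

/-- Aggregation error of one FedRo round: with an `(f,κ)`-robust aggregator,
`‖w⁺ - w - Δ‖² ≤ 3κH²γ²G²(1 + 8L²H(H-1)γ²) + 24κL²H³(H-1)γ⁴‖∇ℓ_𝓗(w)‖²`. -/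
theorem stmt_16 (n d f : ℕ) (hn : 1 ≤ n) (hd : 1 ≤ d) (hf : 2 * f < n)
    (κ : ℝ) (hκ : 0 ≤ κ)
    (A : (Fin n → EuclideanSpace ℝ (Fin d)) → EuclideanSpace ℝ (Fin d))
    (hA : IsRobust n d f κ A)
    (𝓗 : Finset (Fin n)) (h𝓗 : 𝓗.card = n - f)
    (ℓ : Fin n → EuclideanSpace ℝ (Fin d) → ℝ) (L G : ℝ) (hL : 0 < L)
    (hdiff : ∀ k ∈ 𝓗, Differentiable ℝ (ℓ k))
    (hsmooth : ∀ k ∈ 𝓗, ∀ w w' : EuclideanSpace ℝ (Fin d),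
      ‖gradient (ℓ k) w' - gradient (ℓ k) w‖ ≤ L * ‖w' - w‖)
    (lH : EuclideanSpace ℝ (Fin d) → ℝ)
    (hlH : lH = fun w => (𝓗.card : ℝ)⁻¹ * ∑ k ∈ 𝓗, ℓ k w)
    (hhetero : ∀ w' : EuclideanSpace ℝ (Fin d),
      (𝓗.card : ℝ)⁻¹ * ∑ k ∈ 𝓗, ‖gradient (ℓ k) w' - gradient lH w'‖ ^ 2 ≤ G ^ 2)
    (γ : ℝ) (hγ : 0 < γ) (H : ℕ) (hH : 1 ≤ H)
    (hstep : L ^ 2 * γ ^ 2 * (H : ℝ) * ((H : ℝ) - 1) ≤ 1 / 2)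
    (w : EuclideanSpace ℝ (Fin d)) (v : Fin n → ℕ → EuclideanSpace ℝ (Fin d))
    (hv0 : ∀ k ∈ 𝓗, v k 0 = w)
    (hrec : ∀ k ∈ 𝓗, ∀ h : ℕ, v k (h + 1) = v k h - γ • gradient (ℓ k) (v k h))
    (Δ : EuclideanSpace ℝ (Fin d))
    (hΔ : Δ = (𝓗.card : ℝ)⁻¹ • ∑ k ∈ 𝓗, (v k H - w))
    (u : Fin n → EuclideanSpace ℝ (Fin d)) (hu : ∀ k ∈ 𝓗, u k = v k H)
    (wplus : EuclideanSpace ℝ (Fin d)) (hwp : wplus = w + A (fun k => u k - w)) :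
    ‖wplus - w - Δ‖ ^ 2
      ≤ 3 * κ * (H : ℝ) ^ 2 * γ ^ 2 * G ^ 2
          * (1 + 8 * L ^ 2 * (H : ℝ) * ((H : ℝ) - 1) * γ ^ 2)
        + 24 * κ * L ^ 2 * (H : ℝ) ^ 3 * ((H : ℝ) - 1) * γ ^ 4
          * ‖gradient lH w‖ ^ 2 :=
  stmt_16_general n d f hf κ hκ A hA 𝓗 h𝓗 ℓ L G hsmooth lH hhetero γ H hstep w v hv0 hrec Δ hΔ u hu
    wplus hwp
end

section
/- Let n, d ≥ 1, let f be an integer with 0 ≤ f < n/2, let κ ≥ 0, and let A : (ℝ^d)ⁿ → ℝ^d be an (f,κ)-robust aggregator. Let 𝓗 ⊆ {1,…,n} with |𝓗| = n − f, let each ℓ_k : ℝ^d → ℝ (k ∈ 𝓗) be L-smooth (L > 0), set ℓ_𝓗 = (1/|𝓗|)∑_{k∈𝓗} ℓ_k, assume ℓ* := inf_{w∈ℝ^d} ℓ_𝓗(w) is finite, assume the heterogeneity bound (1/|𝓗|)∑_{k∈𝓗}‖∇ℓ_k(w') − ∇ℓ_𝓗(w')‖² ≤ G² for all w', and assume the Polyak-Łojasiewicz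 condition: there is μ > 0 with ℓ_𝓗(w) − ℓ* ≤ (1/(2μ))‖∇ℓ_𝓗(w)‖² for all w ∈ ℝ^d. Fix integers H ≥ 1 and T ≥ 1 and a real β ∈ (0,1), set c' = max(4√2, √(384κ)) and γ = 1/(c'·L·H·T^{1−β}). Consider FedRo iterates: for each t, honest k ∈ 𝓗 computes w_{t,0}^{(k)} = w_t, w_{t,h+1}^{(k)} = w_{t,h}^{(k)} − γ∇ℓ_k(w_{t,h}^{(k)}) for 0 ≤ h < H; uploads u_t^{(k)} are arbitrary for k ∉ 𝓗 and equal w_{t,H}^{(k)} for k ∈ 𝓗; and w_{t+1} = w_t + A(u_t^{(1)} − w_t, …, u_t^{(n)} − w_t). Then for any initialization w₀ and any Byzantine uploads, ℓ_𝓗(w_T) − ℓ* ≤ exp(−μT^β/(8c'L))·(ℓ_𝓗(w₀) − ℓ*) + G²/(2μT^{2−2β}) + 45κG²/μ. -/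
/-!
During a round the honest clients' local iterates stay within `O(γH)` of the server model
(a discrete Grönwall argument using smoothness and heterogeneity), so the mean honest update
is `H` gradient steps on `ℓ_𝓗` up to an error of order `(γLH)²`. Robustness of the aggregator
bounds the remaining error by `κ` times the spread of the honest updates, of order
`κ γ² H² G²`. The descent lemma then yields
`ℓ_𝓗(w_{t+1}) ≤ ℓ_𝓗(w_t) - (γH/16)‖∇ℓ_𝓗(w_t)‖² + ε`, the Polyak-Łojasiewicz inequality turns
this into the contraction `δ_{t+1} ≤ (1 - μγH/8) δ_t + ε` for `δ_t = ℓ_𝓗(w_t) - ℓ*`, and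
unrolling it with `1 - a ≤ exp (-a)` gives the bound.
-/

open Finset
open scoped RealInnerProductSpace

section Norms

variable {ι E : Type*} [SeminormedAddCommGroup E]

lemma norm_sum_sq_le_card_mul (s : Finset ι) (z : ι → E) :
    ‖∑ i ∈ s, z i‖ ^ 2 ≤ #s * ∑ i ∈ s, ‖z i‖ ^ 2 :=
  (pow_le_pow_left₀ (norm_nonneg _) (norm_sum_le _ _) 2).trans sq_sum_le_card_mul_sum_sq

lemma norm_add_sq_le_two_mul (a b : E) : ‖a + b‖ ^ 2 ≤ 2 * (‖a‖ ^ 2 + ‖b‖ ^ 2) := by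
  nlinarith [norm_add_le a b, norm_nonneg (a + b), sq_nonneg (‖a‖ - ‖b‖)]

lemma norm_add₃_sq_le_three_mul (a b c : E) :
    ‖a + b + c‖ ^ 2 ≤ 3 * (‖a‖ ^ 2 + ‖b‖ ^ 2 + ‖c‖ ^ 2) := by
  nlinarith [norm_add₃_le (a := a) (b := b) (c := c), norm_nonneg (a + b + c),
    sq_nonneg (‖a‖ - ‖b‖), sq_nonneg (‖a‖ - ‖c‖), sq_nonneg (‖b‖ - ‖c‖)]

lemma norm_smul_sum_sq_le [NormedSpace ℝ E] (γ : ℝ) (s : Finset ι) (z : ι → E) :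
    ‖γ • ∑ i ∈ s, z i‖ ^ 2 ≤ γ ^ 2 * (#s * ∑ i ∈ s, ‖z i‖ ^ 2) := by
  rw [norm_smul, mul_pow, Real.norm_eq_abs, sq_abs]
  exact mul_le_mul_of_nonneg_left (norm_sum_sq_le_card_mul s z) (sq_nonneg γ)

end Norms

section Smooth

variable {ι E : Type*} [NormedAddCommGroup E] [InnerProductSpace ℝ E]
  {s : Finset ι} {ℓ : ι → E → ℝ} {F f : E → ℝ} {L : ℝ}

lemma differentiable_of_eq_average (hF : F = fun y => (#s : ℝ)⁻¹ * ∑ k ∈ s, ℓ k y)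
    (hℓ : ∀ k ∈ s, Differentiable ℝ (ℓ k)) : Differentiable ℝ F :=
  hF ▸ (Differentiable.fun_sum hℓ).const_mul _

variable [CompleteSpace E]

theorem le_add_inner_gradient_add_sq_of_lipschitz (hf : Differentiable ℝ f)
    (hL : ∀ x y, ‖gradient f y - gradient f x‖ ≤ L * ‖y - x‖) (x y : E) :
    f y ≤ f x + ⟪gradient f x, y - x⟫ + L / 2 * ‖y - x‖ ^ 2 := by
  set v := y - x
  let φ : ℝ → ℝ := fun t => f (x + t • v) - t * ⟪gradient f x, v⟫ - L / 2 * t ^ 2 * ‖v‖ ^ 2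
  have hφ : ∀ t, HasDerivAt φ
      (⟪gradient f (x + t • v), v⟫ - ⟪gradient f x, v⟫ - L * t * ‖v‖ ^ 2) t := by
    intro t
    have hline : HasDerivAt (fun t : ℝ => x + t • v) v t := by
      simpa using ((hasDerivAt_id t).smul_const v).const_add x
    have hfline := (hf (x + t • v)).hasGradientAt.hasFDerivAt.comp_hasDerivAt t hline
    rw [InnerProductSpace.toDual_apply_apply] at hfline
    exact ((hfline.sub ((hasDerivAt_id t).mul_const ⟪gradient f x, v⟫)).sub
      (((hasDerivAt_pow 2 t).const_mul (L / 2)).mul_const (‖v‖ ^ 2))).congr_deriv (by ring)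
  have hanti : AntitoneOn φ (Set.Icc 0 1) := by
    refine antitoneOn_of_hasDerivWithinAt_nonpos (convex_Icc 0 1)
      (fun t _ => (hφ t).continuousAt.continuousWithinAt)
      (fun t _ => (hφ t).hasDerivWithinAt) fun t ht => ?_
    rw [interior_Icc] at ht
    have hlip : ‖gradient f (x + t • v) - gradient f x‖ ≤ L * (t * ‖v‖) := by
      simpa [norm_smul, abs_of_pos ht.1] using hL x (x + t • v)
    have := real_inner_le_norm (gradient f (x + t • v) - gradient f x) v
    rw [inner_sub_left] at this
    nlinarith [mul_le_mul_of_nonneg_right hlip (norm_nonneg v)]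
  have h01 := hanti (Set.left_mem_Icc.2 zero_le_one) (Set.right_mem_Icc.2 zero_le_one) zero_le_one
  have hφ0 : φ 0 = f x := by simp [φ]
  have hφ1 : φ 1 = f y - ⟪gradient f x, v⟫ - L / 2 * ‖v‖ ^ 2 := by simp [φ, v]
  linarith

theorem norm_gradient_sq_le_of_lipschitz (hf : Differentiable ℝ f)
    (hL : ∀ x y, ‖gradient f y - gradient f x‖ ≤ L * ‖y - x‖) (hL0 : 0 < L) {m : ℝ}
    (hm : ∀ y, m ≤ f y) (x : E) :
    ‖gradient f x‖ ^ 2 ≤ 2 * L * (f x - m) := by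
  have key := le_add_inner_gradient_add_sq_of_lipschitz hf hL x (x - L⁻¹ • gradient f x)
  rw [sub_sub_cancel_left, inner_neg_right, real_inner_smul_right, real_inner_self_eq_norm_sq,
    norm_neg, norm_smul, Real.norm_eq_abs, abs_inv, abs_of_pos hL0] at key
  have hstep : L / 2 * (L⁻¹ * ‖gradient f x‖) ^ 2 - L⁻¹ * ‖gradient f x‖ ^ 2
      = -(‖gradient f x‖ ^ 2 / (2 * L)) := by
    field_simp; ring
  have := hm (x - L⁻¹ • gradient f x)
  have h2 : ‖gradient f x‖ ^ 2 / (2 * L) ≤ f x - m := by linarith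
  rwa [div_le_iff₀ (by positivity), mul_comm] at h2

theorem pl_const_le_of_lipschitz (hf : Differentiable ℝ f)
    (hL : ∀ x y, ‖gradient f y - gradient f x‖ ≤ L * ‖y - x‖) (hL0 : 0 < L) {m μ : ℝ}
    (hμ : 0 < μ) (hm : ∀ y, m ≤ f y) {z : E} (hz : m < f z)
    (hPL : f z - m ≤ 1 / (2 * μ) * ‖gradient f z‖ ^ 2) : μ ≤ L := by
  have h := norm_gradient_sq_le_of_lipschitz hf hL hL0 hm z
  rw [div_mul_eq_mul_div, one_mul, le_div_iff₀ (by positivity)] at hPL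
  nlinarith

theorem descent_of_inexact_steps (hf : Differentiable ℝ f)
    (hL : ∀ x y, ‖gradient f y - gradient f x‖ ≤ L * ‖y - x‖) (x e : E) (q : ℕ → E)
    {γ : ℝ} {H : ℕ} (hγ : 0 < γ) (hH : 0 < H) (hL0 : 0 ≤ L) (hLγH : L * γ * H ≤ 1 / 2) :
    f (x + -(γ • ∑ h ∈ range H, q h) + e)
      ≤ f x - γ * H / 4 * ‖gradient f x‖ ^ 2 + γ / 2 * ∑ h ∈ range H, ‖gradient f x - q h‖ ^ 2
        + ((γ * H)⁻¹ + L) * ‖e‖ ^ 2 := by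
  set u := -(γ • ∑ h ∈ range H, q h)
  set c := gradient f x
  have hγH : 0 < γ * H := by positivity
  have hdescent := le_add_inner_gradient_add_sq_of_lipschitz hf hL x (x + u + e)
  rw [add_assoc, add_sub_cancel_left, inner_add_right] at hdescent
  have hinner_u : ⟪c, u⟫ = -(γ / 2) * (H * ‖c‖ ^ 2 + ∑ h ∈ range H, ‖q h‖ ^ 2
      - ∑ h ∈ range H, ‖c - q h‖ ^ 2) := by
    have hterm : ∀ h, ⟪c, q h⟫ = (‖c‖ ^ 2 + ‖q h‖ ^ 2 - ‖c - q h‖ ^ 2) / 2 := by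
      intro h; rw [norm_sub_sq_real]; ring
    simp only [u, inner_neg_right, real_inner_smul_right, inner_sum]
    rw [sum_congr rfl fun h _ => hterm h, ← sum_div, sum_sub_distrib, sum_add_distrib,
      sum_const, card_range, nsmul_eq_mul]
    ring
  have hnorm_u : L * ‖u‖ ^ 2 ≤ γ / 2 * ∑ h ∈ range H, ‖q h‖ ^ 2 := by
    have := norm_smul_sum_sq_le γ (range H) q
    rw [card_range] at this
    rw [norm_neg]
    calc L * ‖γ • ∑ h ∈ range H, q h‖ ^ 2
        ≤ L * (γ ^ 2 * (H * ∑ h ∈ range H, ‖q h‖ ^ 2)) := by gcongr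
      _ = (L * γ * H) * (γ * ∑ h ∈ range H, ‖q h‖ ^ 2) := by ring
      _ ≤ 1 / 2 * (γ * ∑ h ∈ range H, ‖q h‖ ^ 2) := by gcongr
      _ = _ := by ring
  have hinner_e : ⟪c, e⟫ ≤ γ * H / 4 * ‖c‖ ^ 2 + (γ * H)⁻¹ * ‖e‖ ^ 2 := by
    have hsq : 0 ≤ (γ * H)⁻¹ * (γ * H * ‖c‖ / 2 - ‖e‖) ^ 2 := by positivity
    have hexp : (γ * H)⁻¹ * (γ * H * ‖c‖ / 2 - ‖e‖) ^ 2
        = γ * H / 4 * ‖c‖ ^ 2 + (γ * H)⁻¹ * ‖e‖ ^ 2 - ‖c‖ * ‖e‖ := by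
      field_simp; ring
    linarith [real_inner_le_norm c e]
  have hsplit := mul_le_mul_of_nonneg_left (norm_add_sq_le_two_mul u e) (by positivity : 0 ≤ L / 2)
  rw [add_assoc]
  linarith

theorem hasGradientAt_const_mul_sum (c : ℝ) {x : E}
    (hℓ : ∀ k ∈ s, DifferentiableAt ℝ (ℓ k) x) :
    HasGradientAt (fun y => c * ∑ k ∈ s, ℓ k y) (c • ∑ k ∈ s, gradient (ℓ k) x) x := by
  rw [hasGradientAt_iff_hasFDerivAt, map_smul, map_sum]
  simp only [toDual_gradient]
  exact (HasFDerivAt.fun_sum fun k hk => (hℓ k hk).hasFDerivAt).const_mul c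

lemma gradient_eq_of_eq_average (hF : F = fun y => (#s : ℝ)⁻¹ * ∑ k ∈ s, ℓ k y)
    (hℓ : ∀ k ∈ s, Differentiable ℝ (ℓ k)) (x : E) :
    gradient F x = (#s : ℝ)⁻¹ • ∑ k ∈ s, gradient (ℓ k) x :=
  hF ▸ (hasGradientAt_const_mul_sum _ fun k hk => hℓ k hk x).gradient

lemma lipschitz_gradient_of_eq_average (hs : s.Nonempty)
    (hF : F = fun y => (#s : ℝ)⁻¹ * ∑ k ∈ s, ℓ k y) (hℓ : ∀ k ∈ s, Differentiable ℝ (ℓ k))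
    (hsmooth : ∀ k ∈ s, ∀ x y, ‖gradient (ℓ k) y - gradient (ℓ k) x‖ ≤ L * ‖y - x‖) (x y : E) :
    ‖gradient F y - gradient F x‖ ≤ L * ‖y - x‖ := by
  have hm : (0 : ℝ) < #s := by exact_mod_cast hs.card_pos
  rw [gradient_eq_of_eq_average hF hℓ, gradient_eq_of_eq_average hF hℓ, ← smul_sub,
    ← sum_sub_distrib, norm_smul, norm_inv, Real.norm_natCast, inv_mul_le_iff₀ hm]
  exact (norm_sum_le_of_le s fun k hk => hsmooth k hk x y).trans_eq (by simp)

end Smooth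

section LocalSteps

variable {ι E : Type*} [SeminormedAddCommGroup E] [NormedSpace ℝ E]

lemma card_mul_norm_inv_card_smul_sum_sq_le (s : Finset ι) (z : ι → E) :
    #s * ‖(#s : ℝ)⁻¹ • ∑ i ∈ s, z i‖ ^ 2 ≤ ∑ i ∈ s, ‖z i‖ ^ 2 := by
  rcases s.eq_empty_or_nonempty with rfl | hs
  · simp
  have hm : (0 : ℝ) < #s := by exact_mod_cast hs.card_pos
  calc #s * ‖(#s : ℝ)⁻¹ • ∑ i ∈ s, z i‖ ^ 2
      ≤ #s * ((#s : ℝ)⁻¹ ^ 2 * (#s * ∑ i ∈ s, ‖z i‖ ^ 2)) := by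
        gcongr; exact norm_smul_sum_sq_le _ s z
    _ = ∑ i ∈ s, ‖z i‖ ^ 2 := by field_simp

lemma sub_eq_neg_smul_sum_range_of_step {v g : ℕ → E} {γ : ℝ}
    (hv : ∀ h, v (h + 1) = v h - γ • g h) (h : ℕ) :
    v h - v 0 = -(γ • ∑ j ∈ range h, g j) := by
  induction h with
  | zero => simp
  | succ h ih => rw [hv, sum_range_succ, smul_add, neg_add, ← ih]; abel

lemma le_of_le_mul_sum_range {D : ℕ → ℝ} {γ L B : ℝ} {H : ℕ} (hB : 0 ≤ B)
    (hα : 32 * (γ * L * H) ^ 2 ≤ 1)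
    (hD : ∀ h ≤ H, D h ≤ γ ^ 2 * h * ∑ j ∈ range h, (3 * L ^ 2 * D j + 3 * B)) :
    ∀ h ≤ H, D h ≤ 4 * γ ^ 2 * H ^ 2 * B := by
  intro h
  induction h using Nat.strong_induction_on with
  | _ h ih =>
    intro hh
    have hhH : (h : ℝ) ≤ H := by exact_mod_cast hh
    have hsum : ∑ j ∈ range h, (3 * L ^ 2 * D j + 3 * B)
        ≤ h * (3 * L ^ 2 * (4 * γ ^ 2 * H ^ 2 * B) + 3 * B) := by
      calc ∑ j ∈ range h, (3 * L ^ 2 * D j + 3 * B)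
          ≤ ∑ _j ∈ range h, (3 * L ^ 2 * (4 * γ ^ 2 * H ^ 2 * B) + 3 * B) := by
            refine sum_le_sum fun j hj => ?_
            have := ih j (mem_range.1 hj) (by linarith [mem_range.1 hj])
            gcongr
        _ = _ := by rw [sum_const, card_range, nsmul_eq_mul]
    calc D h ≤ γ ^ 2 * h * (h * (3 * L ^ 2 * (4 * γ ^ 2 * H ^ 2 * B) + 3 * B)) :=
          (hD h hh).trans (by gcongr)
      _ ≤ γ ^ 2 * H * (H * (3 * L ^ 2 * (4 * γ ^ 2 * H ^ 2 * B) + 3 * B)) := by gcongr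
      _ = γ ^ 2 * H ^ 2 * (12 * (γ * L * H) ^ 2 * B + 3 * B) := by ring
      _ ≤ γ ^ 2 * H ^ 2 * (4 * B) := by gcongr; nlinarith
      _ = 4 * γ ^ 2 * H ^ 2 * B := by ring

/-- Local gradient descent `v k (h + 1) = v k h - γ • g k h` of the clients `k ∈ s` from `x`,
where `g k h` is client `k`'s gradient at `v k h` and `c` the gradient of the average loss
at `x`, recorded through the properties the analysis uses. -/
structure LocalGDRun (s : Finset ι) (x c : E) (v g : ι → ℕ → E) (γ L G : ℝ) : Prop where
  sub_start : ∀ k ∈ s, ∀ h, v k h - x = -(γ • ∑ j ∈ range h, g k j)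
  lipschitz : ∀ k ∈ s, ∀ h, ‖g k h - g k 0‖ ≤ L * ‖v k h - x‖
  center_eq : c = (#s : ℝ)⁻¹ • ∑ k ∈ s, g k 0
  heterogeneity : ∑ k ∈ s, ‖g k 0 - c‖ ^ 2 ≤ #s * G ^ 2

namespace LocalGDRun

variable {s : Finset ι} {x c : E} {v g : ι → ℕ → E} {γ L G : ℝ}

lemma sum_norm_sq_sub_le (hr : LocalGDRun s x c v g γ L G) (y : E) (h : ℕ) :
    ∑ k ∈ s, ‖g k h - y‖ ^ 2
      ≤ 3 * L ^ 2 * ∑ k ∈ s, ‖v k h - x‖ ^ 2 + 3 * #s * (G ^ 2 + ‖c - y‖ ^ 2) := by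
  have hpoint : ∀ k ∈ s, ‖g k h - y‖ ^ 2
      ≤ 3 * (L ^ 2 * ‖v k h - x‖ ^ 2 + ‖g k 0 - c‖ ^ 2 + ‖c - y‖ ^ 2) := by
    intro k hk
    have hlip : ‖g k h - g k 0‖ ^ 2 ≤ L ^ 2 * ‖v k h - x‖ ^ 2 := by
      rw [← mul_pow]; gcongr; exact hr.lipschitz k hk h
    have := norm_add₃_sq_le_three_mul (g k h - g k 0) (g k 0 - c) (c - y)
    rw [sub_add_sub_cancel, sub_add_sub_cancel] at this
    linarith
  have hsum := sum_le_sum hpoint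
  rw [← mul_sum, sum_add_distrib, sum_add_distrib, ← mul_sum, sum_const, nsmul_eq_mul] at hsum
  linarith [hr.heterogeneity]

lemma card_mul_norm_center_sub_mean_sq_le (hr : LocalGDRun s x c v g γ L G) (h : ℕ) :
    #s * ‖c - (#s : ℝ)⁻¹ • ∑ k ∈ s, g k h‖ ^ 2 ≤ L ^ 2 * ∑ k ∈ s, ‖v k h - x‖ ^ 2 := by
  rw [hr.center_eq, ← smul_sub, ← sum_sub_distrib, mul_sum]
  refine (card_mul_norm_inv_card_smul_sum_sq_le s _).trans (sum_le_sum fun k hk => ?_)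
  rw [norm_sub_rev, ← mul_pow]
  gcongr
  exact hr.lipschitz k hk h

lemma sum_norm_sq_sub_mean_le (hr : LocalGDRun s x c v g γ L G) (h : ℕ) :
    ∑ k ∈ s, ‖g k h - (#s : ℝ)⁻¹ • ∑ j ∈ s, g j h‖ ^ 2
      ≤ 6 * L ^ 2 * ∑ k ∈ s, ‖v k h - x‖ ^ 2 + 3 * #s * G ^ 2 := by
  linarith [hr.sum_norm_sq_sub_le ((#s : ℝ)⁻¹ • ∑ j ∈ s, g j h) h,
    hr.card_mul_norm_center_sub_mean_sq_le h]

lemma sum_norm_sq_sub_start_le (hr : LocalGDRun s x c v g γ L G) {H : ℕ}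
    (hα : 32 * (γ * L * H) ^ 2 ≤ 1) {h : ℕ} (hh : h ≤ H) :
    ∑ k ∈ s, ‖v k h - x‖ ^ 2 ≤ 4 * γ ^ 2 * H ^ 2 * (#s * (G ^ 2 + ‖c‖ ^ 2)) := by
  refine le_of_le_mul_sum_range (D := fun h => ∑ k ∈ s, ‖v k h - x‖ ^ 2)
    (B := #s * (G ^ 2 + ‖c‖ ^ 2)) (by positivity) hα (fun h _ => ?_) h hh
  calc ∑ k ∈ s, ‖v k h - x‖ ^ 2
      ≤ ∑ k ∈ s, γ ^ 2 * (h * ∑ j ∈ range h, ‖g k j - 0‖ ^ 2) := by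
        refine sum_le_sum fun k hk => ?_
        simpa [hr.sub_start k hk] using norm_smul_sum_sq_le γ (range h) (g k)
    _ = γ ^ 2 * h * ∑ j ∈ range h, ∑ k ∈ s, ‖g k j - 0‖ ^ 2 := by
        rw [sum_comm (s := range h), mul_assoc, mul_sum, mul_sum]
    _ ≤ _ := by
        gcongr with j
        simpa [mul_assoc] using hr.sum_norm_sq_sub_le 0 j

lemma sum_range_norm_sq_center_sub_mean_le (hr : LocalGDRun s x c v g γ L G)
    (hs : s.Nonempty) {H : ℕ} (hα : 32 * (γ * L * H) ^ 2 ≤ 1) :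
    ∑ h ∈ range H, ‖c - (#s : ℝ)⁻¹ • ∑ k ∈ s, g k h‖ ^ 2
      ≤ H * (L ^ 2 * (4 * γ ^ 2 * H ^ 2 * (G ^ 2 + ‖c‖ ^ 2))) := by
  have hm : (0 : ℝ) < #s := by exact_mod_cast hs.card_pos
  calc ∑ h ∈ range H, ‖c - (#s : ℝ)⁻¹ • ∑ k ∈ s, g k h‖ ^ 2
      ≤ ∑ _h ∈ range H, L ^ 2 * (4 * γ ^ 2 * H ^ 2 * (G ^ 2 + ‖c‖ ^ 2)) := by
        refine sum_le_sum fun h hh => le_of_mul_le_mul_left ?_ hm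
        calc _ ≤ L ^ 2 * ∑ k ∈ s, ‖v k h - x‖ ^ 2 := hr.card_mul_norm_center_sub_mean_sq_le h
          _ ≤ L ^ 2 * (4 * γ ^ 2 * H ^ 2 * (#s * (G ^ 2 + ‖c‖ ^ 2))) := by
            gcongr; exact hr.sum_norm_sq_sub_start_le hα (mem_range.1 hh).le
          _ = _ := by ring
    _ = _ := by rw [sum_const, card_range, nsmul_eq_mul]

lemma mean_sub_start_eq (hr : LocalGDRun s x c v g γ L G) (h : ℕ) :
    (#s : ℝ)⁻¹ • ∑ k ∈ s, (v k h - x)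
      = -(γ • ∑ j ∈ range h, (#s : ℝ)⁻¹ • ∑ k ∈ s, g k j) := by
  rw [sum_congr rfl fun k hk => hr.sub_start k hk h, sum_neg_distrib, ← smul_sum, sum_comm,
    ← smul_sum, smul_neg, smul_comm]

lemma sum_norm_sq_sub_mean_sub_start_le (hr : LocalGDRun s x c v g γ L G) {H : ℕ}
    (hα : 32 * (γ * L * H) ^ 2 ≤ 1) :
    ∑ k ∈ s, ‖(v k H - x) - (#s : ℝ)⁻¹ • ∑ j ∈ s, (v j H - x)‖ ^ 2
      ≤ #s * (γ ^ 2 * H ^ 2 * (24 * (γ * L * H) ^ 2 * (G ^ 2 + ‖c‖ ^ 2) + 3 * G ^ 2)) := by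
  set gbar : ℕ → E := fun h => (#s : ℝ)⁻¹ • ∑ j ∈ s, g j h
  calc ∑ k ∈ s, ‖(v k H - x) - (#s : ℝ)⁻¹ • ∑ j ∈ s, (v j H - x)‖ ^ 2
      ≤ ∑ k ∈ s, γ ^ 2 * (H * ∑ h ∈ range H, ‖g k h - gbar h‖ ^ 2) := by
        refine sum_le_sum fun k hk => ?_
        have := norm_smul_sum_sq_le γ (range H) (fun h => gbar h - g k h)
        simp only [card_range, norm_sub_rev (gbar _)] at this
        rwa [hr.mean_sub_start_eq, hr.sub_start k hk, neg_sub_neg, ← smul_sub,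
          ← sum_sub_distrib]
    _ = γ ^ 2 * H * ∑ h ∈ range H, ∑ k ∈ s, ‖g k h - gbar h‖ ^ 2 := by
        rw [sum_comm (s := range H), mul_assoc, mul_sum, mul_sum]
    _ ≤ γ ^ 2 * H * ∑ _h ∈ range H,
          (6 * L ^ 2 * (4 * γ ^ 2 * H ^ 2 * (#s * (G ^ 2 + ‖c‖ ^ 2))) + 3 * #s * G ^ 2) := by
        gcongr with h hh
        refine (hr.sum_norm_sq_sub_mean_le h).trans ?_
        gcongr
        exact hr.sum_norm_sq_sub_start_le hα (mem_range.1 hh).le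
    _ = _ := by rw [sum_const, card_range, nsmul_eq_mul]; ring

end LocalGDRun

end LocalSteps

lemma round_descent_coefficient_le {α κ τ S B : ℝ} (hα : 0 ≤ α) (hκ : 0 ≤ κ) (hτ : 1 ≤ τ)
    (hS : 0 ≤ S) (hB : 0 ≤ B) (h32 : 32 * α ^ 2 * τ ^ 2 ≤ 1)
    (h384 : 384 * κ * α ^ 2 * τ ^ 2 ≤ 1) :
    -S / 4 + 2 * α ^ 2 * (B + S) + (1 + α) * κ * (24 * α ^ 2 * (B + S) + 3 * B)
      ≤ -S / 16 + B / (16 * τ ^ 2) + 45 / 8 * κ * B := by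
  have hτ2 : 1 ≤ τ ^ 2 := one_le_pow₀ hτ
  have h32' : 32 * α ^ 2 ≤ 1 := by nlinarith
  have h384' : 384 * κ * α ^ 2 ≤ 1 := by nlinarith
  have hα4 : α ≤ 1 / 4 := by nlinarith
  have hB16 : 2 * α ^ 2 * B ≤ B / (16 * τ ^ 2) := by
    rw [le_div_iff₀ (by positivity)]; nlinarith
  have hκS : (1 + α) * κ * (24 * α ^ 2 * S) ≤ S / 8 := by
    nlinarith [mul_le_mul_of_nonneg_right h384' hS, mul_nonneg (mul_nonneg hκ (sq_nonneg α)) hS]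
  have hκB : (1 + α) * κ * (24 * α ^ 2 * B + 3 * B) ≤ 45 / 8 * κ * B := by
    nlinarith [mul_le_mul_of_nonneg_right h32' (mul_nonneg hκ hB),
      mul_nonneg (mul_nonneg hκ (sq_nonneg α)) hB, mul_nonneg hκ hB]
  nlinarith

section Round

variable {ι E : Type*} [NormedAddCommGroup E] [InnerProductSpace ℝ E] [CompleteSpace E]
  {s : Finset ι} {ℓ : ι → E → ℝ} {F f : E → ℝ} {x c : E} {v g : ι → ℕ → E} {γ L G κ : ℝ}
  {H : ℕ}

theorem LocalGDRun.of_gradient_steps (hF : F = fun y => (#s : ℝ)⁻¹ * ∑ k ∈ s, ℓ k y)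
    (hℓ : ∀ k ∈ s, Differentiable ℝ (ℓ k))
    (hsmooth : ∀ k ∈ s, ∀ x y, ‖gradient (ℓ k) y - gradient (ℓ k) x‖ ≤ L * ‖y - x‖)
    (hs : s.Nonempty)
    (hhet : (#s : ℝ)⁻¹ * ∑ k ∈ s, ‖gradient (ℓ k) x - gradient F x‖ ^ 2 ≤ G ^ 2)
    (hv0 : ∀ k ∈ s, v k 0 = x)
    (hv : ∀ k ∈ s, ∀ h, v k (h + 1) = v k h - γ • gradient (ℓ k) (v k h)) :
    LocalGDRun s x (gradient F x) v (fun k h => gradient (ℓ k) (v k h)) γ L G where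
  sub_start k hk h := hv0 k hk ▸ sub_eq_neg_smul_sum_range_of_step (hv k hk) h
  lipschitz k hk h := by simpa only [hv0 k hk] using hsmooth k hk x (v k h)
  center_eq := by
    rw [gradient_eq_of_eq_average hF hℓ]
    exact congrArg _ (sum_congr rfl fun k hk => by rw [hv0 k hk])
  heterogeneity := by
    rw [← inv_mul_le_iff₀ (by exact_mod_cast hs.card_pos)]
    exact (congrArg _ (sum_congr rfl fun k hk => by rw [hv0 k hk])).trans_le hhet

theorem LocalGDRun.descent_of_inexact_mean (hr : LocalGDRun s x c v g γ L G)
    (hs : s.Nonempty) (hf : Differentiable ℝ f)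
    (hfL : ∀ x y, ‖gradient f y - gradient f x‖ ≤ L * ‖y - x‖) (hc : gradient f x = c)
    (hγ : 0 < γ) (hH : 0 < H) (hL : 0 ≤ L) (hα : 32 * (γ * L * H) ^ 2 ≤ 1) (hκ : 0 ≤ κ)
    (e : E) (he : ‖e‖ ^ 2
      ≤ κ / #s * ∑ k ∈ s, ‖(v k H - x) - (#s : ℝ)⁻¹ • ∑ j ∈ s, (v j H - x)‖ ^ 2) :
    f (x + (#s : ℝ)⁻¹ • ∑ k ∈ s, (v k H - x) + e)
      ≤ f x + γ * H * (-‖c‖ ^ 2 / 4 + 2 * (γ * L * H) ^ 2 * (G ^ 2 + ‖c‖ ^ 2)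
        + (1 + γ * L * H) * κ * (24 * (γ * L * H) ^ 2 * (G ^ 2 + ‖c‖ ^ 2) + 3 * G ^ 2)) := by
  have hm : (0 : ℝ) < #s := by exact_mod_cast hs.card_pos
  have hγH : 0 < γ * H := by positivity
  have hLγH : L * γ * H ≤ 1 / 2 := by nlinarith
  have hdescent := descent_of_inexact_steps hf hfL x e (fun h => (#s : ℝ)⁻¹ • ∑ k ∈ s, g k h)
    hγ hH hL hLγH
  rw [hc] at hdescent
  have hdrift : γ / 2 * ∑ h ∈ range H, ‖c - (#s : ℝ)⁻¹ • ∑ k ∈ s, g k h‖ ^ 2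
      ≤ γ * H * (2 * (γ * L * H) ^ 2 * (G ^ 2 + ‖c‖ ^ 2)) := by
    have := hr.sum_range_norm_sq_center_sub_mean_le hs hα
    calc _ ≤ γ / 2 * (H * (L ^ 2 * (4 * γ ^ 2 * H ^ 2 * (G ^ 2 + ‖c‖ ^ 2)))) := by gcongr
      _ = _ := by ring
  have herror : ((γ * H)⁻¹ + L) * ‖e‖ ^ 2
      ≤ γ * H * ((1 + γ * L * H) * κ * (24 * (γ * L * H) ^ 2 * (G ^ 2 + ‖c‖ ^ 2) + 3 * G ^ 2)) := by
    have := hr.sum_norm_sq_sub_mean_sub_start_le hα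
    calc ((γ * H)⁻¹ + L) * ‖e‖ ^ 2
        ≤ ((γ * H)⁻¹ + L) * (κ / #s * (#s * (γ ^ 2 * H ^ 2
          * (24 * (γ * L * H) ^ 2 * (G ^ 2 + ‖c‖ ^ 2) + 3 * G ^ 2)))) := by
          gcongr; exact he.trans (by gcongr)
      _ = _ := by field_simp
  rw [hr.mean_sub_start_eq]
  linarith

theorem LocalGDRun.sub_le_contraction (hr : LocalGDRun s x c v g γ L G)
    (hs : s.Nonempty) (hf : Differentiable ℝ f)
    (hfL : ∀ x y, ‖gradient f y - gradient f x‖ ≤ L * ‖y - x‖) (hc : gradient f x = c)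
    (hγ : 0 < γ) (hH : 0 < H) (hL : 0 ≤ L) (hκ : 0 ≤ κ) {τ : ℝ} (hτ : 1 ≤ τ)
    (h32 : 32 * (γ * L * H) ^ 2 * τ ^ 2 ≤ 1) (h384 : 384 * κ * (γ * L * H) ^ 2 * τ ^ 2 ≤ 1)
    (e : E) (he : ‖e‖ ^ 2
      ≤ κ / #s * ∑ k ∈ s, ‖(v k H - x) - (#s : ℝ)⁻¹ • ∑ j ∈ s, (v j H - x)‖ ^ 2)
    {m μ : ℝ} (hμ : 0 < μ) (hPL : f x - m ≤ 1 / (2 * μ) * ‖c‖ ^ 2) :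
    f (x + (#s : ℝ)⁻¹ • ∑ k ∈ s, (v k H - x) + e) - m
      ≤ (1 - μ * γ * H / 8) * (f x - m) + γ * H * (G ^ 2 / (16 * τ ^ 2) + 45 / 8 * κ * G ^ 2) := by
  have hγH : 0 < γ * H := by positivity
  have hα : 32 * (γ * L * H) ^ 2 ≤ 1 := by nlinarith [one_le_pow₀ (n := 2) hτ]
  have hstep := hr.descent_of_inexact_mean hs hf hfL hc hγ hH hL hα hκ e he
  have hcoef := mul_le_mul_of_nonneg_left (round_descent_coefficient_le (by positivity) hκ hτ
    (sq_nonneg ‖c‖) (sq_nonneg G) h32 h384) hγH.le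
  have hPL' := mul_le_mul_of_nonneg_left hPL (by positivity : 0 ≤ μ * γ * H / 8)
  have hPLc : μ * γ * H / 8 * (1 / (2 * μ) * ‖c‖ ^ 2) = γ * H / 16 * ‖c‖ ^ 2 := by
    field_simp; ring
  linarith

end Round

lemma le_exp_mul_add_div_of_le_one_sub_mul_add {δ : ℕ → ℝ} {a ε : ℝ} (ha0 : 0 < a)
    (ha1 : a ≤ 1) (hε : 0 ≤ ε) (hδ0 : 0 ≤ δ 0)
    (hstep : ∀ t, δ (t + 1) ≤ (1 - a) * δ t + ε) (T : ℕ) :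
    δ T ≤ Real.exp (-(a * T)) * δ 0 + ε / a := by
  have hpow : δ T ≤ (1 - a) ^ T * δ 0 + ε / a := by
    induction T with
    | zero => simpa using div_nonneg hε ha0.le
    | succ T ih =>
      calc δ (T + 1) ≤ (1 - a) * ((1 - a) ^ T * δ 0 + ε / a) + ε :=
            (hstep T).trans (by gcongr)
        _ = (1 - a) ^ (T + 1) * δ 0 + ε / a := by field_simp; ring
  refine hpow.trans ?_
  gcongr ?_ * _ + _
  rw [show -(a * T) = T * (-a) by ring, Real.exp_nat_mul]
  exact pow_le_pow_left₀ (by linarith) (by linarith [Real.add_one_le_exp (-a)]) T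

lemma stepsize_sq_bounds {κ L H τ c' γ : ℝ} (hκ : 0 ≤ κ)
    (hc' : c' = max (4 * Real.sqrt 2) (Real.sqrt (384 * κ))) (hpos : 0 < L * H * τ)
    (hγ : γ = 1 / (c' * L * H * τ)) :
    32 * (γ * L * H) ^ 2 * τ ^ 2 ≤ 1 ∧ 384 * κ * (γ * L * H) ^ 2 * τ ^ 2 ≤ 1 := by
  have h32 : 32 ≤ c' ^ 2 := by
    have := Real.sq_sqrt (show (0 : ℝ) ≤ 2 by norm_num)
    nlinarith [le_max_left (4 * Real.sqrt 2) (Real.sqrt (384 * κ)), Real.sqrt_nonneg 2]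
  have h384 : 384 * κ ≤ c' ^ 2 := by
    have := Real.sq_sqrt (show 0 ≤ 384 * κ by positivity)
    nlinarith [le_max_right (4 * Real.sqrt 2) (Real.sqrt (384 * κ)), Real.sqrt_nonneg (384 * κ)]
  have hc'0 : 0 < c' ^ 2 := by linarith
  have hsq : (γ * L * H) ^ 2 * τ ^ 2 = 1 / c' ^ 2 := by
    have hγ' : γ * L * H * τ = 1 / c' := by
      rw [show γ * L * H * τ = γ * (L * H * τ) by ring, hγ,
        show c' * L * H * τ = c' * (L * H * τ) by ring, one_div_mul_eq_div,
        div_mul_cancel_right₀ hpos.ne', one_div]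
    rw [← mul_pow, hγ', one_div_pow]
  constructor
  · calc 32 * (γ * L * H) ^ 2 * τ ^ 2 = 32 / c' ^ 2 := by rw [mul_assoc, hsq]; ring
      _ ≤ 1 := (div_le_one hc'0).2 h32
  · calc 384 * κ * (γ * L * H) ^ 2 * τ ^ 2 = 384 * κ / c' ^ 2 := by rw [mul_assoc, hsq]; ring
      _ ≤ 1 := (div_le_one hc'0).2 h384

lemma neg_rate_mul_horizon_eq {c' L H T β γ : ℝ} (μ : ℝ) (hT : 0 < T) (hc' : c' ≠ 0)
    (hL : L ≠ 0) (hH : H ≠ 0) (hγ : γ = 1 / (c' * L * H * T ^ (1 - β))) :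
    -(μ * γ * H / 8 * T) = -(μ * T ^ β) / (8 * c' * L) := by
  have hTβ : T ^ (1 - β) * T ^ β = T := by rw [← Real.rpow_add hT]; simp
  have := (Real.rpow_pos_of_pos hT (1 - β)).ne'
  rw [hγ]
  field_simp
  rw [mul_assoc μ, hTβ]

lemma error_div_rate_eq {γ H μ κ G T β : ℝ} (hT : 0 ≤ T) (hγ : γ ≠ 0) (hH : H ≠ 0)
    (hμ : μ ≠ 0) :
    γ * H * (G ^ 2 / (16 * (T ^ (1 - β)) ^ 2) + 45 / 8 * κ * G ^ 2) / (μ * γ * H / 8)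
      = G ^ 2 / (2 * μ * T ^ (2 - 2 * β)) + 45 * κ * G ^ 2 / μ := by
  rw [← Real.rpow_natCast (T ^ (1 - β)) 2, ← Real.rpow_mul hT]
  field_simp
  ring_nf

lemma IsRobust.norm_sub_mean_sq_le_of_eqOn {n d f : ℕ} {κ : ℝ}
    {A : (Fin n → EuclideanSpace ℝ (Fin d)) → EuclideanSpace ℝ (Fin d)} (hA : IsRobust n d f κ A)
    {S : Finset (Fin n)} (hS : #S = n - f) {x y : Fin n → EuclideanSpace ℝ (Fin d)}
    (hxy : ∀ i ∈ S, x i = y i) :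
    ‖A x - (#S : ℝ)⁻¹ • ∑ i ∈ S, y i‖ ^ 2
      ≤ κ / #S * ∑ i ∈ S, ‖y i - (#S : ℝ)⁻¹ • ∑ j ∈ S, y j‖ ^ 2 := by
  have h := hA x S hS
  rw [sum_congr rfl hxy] at h
  exact h.trans_eq (congrArg _ (sum_congr rfl fun i hi => by rw [hxy i hi]))

theorem stmt_19_general (n d f : ℕ) (hf : 2 * f < n)
    (κ : ℝ) (hκ : 0 ≤ κ)
    (A : (Fin n → EuclideanSpace ℝ (Fin d)) → EuclideanSpace ℝ (Fin d))
    (hA : IsRobust n d f κ A)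
    (𝓗 : Finset (Fin n)) (h𝓗 : 𝓗.card = n - f)
    (ℓ : Fin n → EuclideanSpace ℝ (Fin d) → ℝ) (L G : ℝ) (hL : 0 < L)
    (hdiff : ∀ k ∈ 𝓗, Differentiable ℝ (ℓ k))
    (hsmooth : ∀ k ∈ 𝓗, ∀ w w' : EuclideanSpace ℝ (Fin d),
      ‖gradient (ℓ k) w' - gradient (ℓ k) w‖ ≤ L * ‖w' - w‖)
    (lH : EuclideanSpace ℝ (Fin d) → ℝ)
    (hlH : lH = fun w => (𝓗.card : ℝ)⁻¹ * ∑ k ∈ 𝓗, ℓ k w)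
    (hbdd : BddBelow (Set.range lH))
    (lstar : ℝ) (hlstar : lstar = ⨅ w : EuclideanSpace ℝ (Fin d), lH w)
    (hhetero : ∀ w' : EuclideanSpace ℝ (Fin d),
      (𝓗.card : ℝ)⁻¹ * ∑ k ∈ 𝓗, ‖gradient (ℓ k) w' - gradient lH w'‖ ^ 2 ≤ G ^ 2)
    (μ : ℝ) (hμ : 0 < μ)
    (hPL : ∀ w' : EuclideanSpace ℝ (Fin d),
      lH w' - lstar ≤ (1 / (2 * μ)) * ‖gradient lH w'‖ ^ 2)
    (H T : ℕ) (hH : 1 ≤ H) (hT : 1 ≤ T)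
    (β : ℝ) (hβ1 : β < 1)
    (c' : ℝ) (hc' : c' = max (4 * Real.sqrt 2) (Real.sqrt (384 * κ)))
    (γ : ℝ) (hγ : γ = 1 / (c' * L * (H : ℝ) * (T : ℝ) ^ ((1 : ℝ) - β)))
    (w : ℕ → EuclideanSpace ℝ (Fin d))
    (v : ℕ → Fin n → ℕ → EuclideanSpace ℝ (Fin d))
    (u : ℕ → Fin n → EuclideanSpace ℝ (Fin d))
    (hv0 : ∀ t, ∀ k ∈ 𝓗, v t k 0 = w t)
    (hrec : ∀ t, ∀ k ∈ 𝓗, ∀ h : ℕ,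
      v t k (h + 1) = v t k h - γ • gradient (ℓ k) (v t k h))
    (hu : ∀ t, ∀ k ∈ 𝓗, u t k = v t k H)
    (hw : ∀ t, w (t + 1) = w t + A (fun k => u t k - w t)) :
    lH (w T) - lstar
      ≤ Real.exp (-(μ * (T : ℝ) ^ β) / (8 * c' * L)) * (lH (w 0) - lstar)
        + G ^ 2 / (2 * μ * (T : ℝ) ^ ((2 : ℝ) - 2 * β))
        + 45 * κ * G ^ 2 / μ := by
  have hs : 𝓗.Nonempty := card_pos.1 (by omega)
  have hdiffH := differentiable_of_eq_average hlH hdiff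
  have hsmoothH := lipschitz_gradient_of_eq_average hs hlH hdiff hsmooth
  have hstar : ∀ z, lstar ≤ lH z := fun z => hlstar ▸ ciInf_le hbdd z
  by_cases hdeg : ∀ z, lH z ≤ lstar
  · have := hstar (w 0)
    have : 0 ≤ Real.exp (-(μ * (T : ℝ) ^ β) / (8 * c' * L)) * (lH (w 0) - lstar)
        + G ^ 2 / (2 * μ * (T : ℝ) ^ ((2 : ℝ) - 2 * β)) + 45 * κ * G ^ 2 / μ := by positivity
    linarith [hdeg (w T)]
  -- otherwise `μ ≤ L`, which keeps the contraction factor `1 - μγH/8` nonnegative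
  obtain ⟨z, hz⟩ := not_forall.1 hdeg
  have hμL := pl_const_le_of_lipschitz hdiffH hsmoothH hL hμ hstar (not_le.1 hz) (hPL z)
  have hT0 : (0 : ℝ) < T := by exact_mod_cast hT
  have hτ : 1 ≤ (T : ℝ) ^ ((1 : ℝ) - β) := Real.one_le_rpow (by exact_mod_cast hT) (by linarith)
  obtain ⟨h32, h384⟩ := stepsize_sq_bounds hκ hc' (by positivity) hγ
  have hc'0 : 0 < c' := hc' ▸ lt_max_of_lt_left (by positivity)
  have hγ0 : 0 < γ := by rw [hγ]; positivity
  have hround : ∀ t, lH (w (t + 1)) - lstar ≤ (1 - μ * γ * H / 8) * (lH (w t) - lstar)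
      + γ * H * (G ^ 2 / (16 * ((T : ℝ) ^ ((1 : ℝ) - β)) ^ 2) + 45 / 8 * κ * G ^ 2) := by
    intro t
    have hr := LocalGDRun.of_gradient_steps hlH hdiff hsmooth hs (hhetero (w t)) (hv0 t) (hrec t)
    have he := hA.norm_sub_mean_sq_le_of_eqOn h𝓗 (x := fun k => u t k - w t)
      (y := fun k => v t k H - w t) (fun k hk => by rw [hu t k hk])
    have := hr.sub_le_contraction hs hdiffH hsmoothH rfl hγ0 (by omega) hL.le hκ hτ h32 h384
      _ he hμ (hPL (w t))
    rwa [add_add_sub_cancel, ← hw t] at this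
  have hα : γ * L * H ≤ 1 := by nlinarith [one_le_pow₀ (n := 2) hτ]
  have hrate := le_exp_mul_add_div_of_le_one_sub_mul_add (δ := fun t => lH (w t) - lstar)
    (by positivity) (by nlinarith) (by positivity) (sub_nonneg.2 (hstar _)) hround T
  rwa [neg_rate_mul_horizon_eq μ hT0 hc'0.ne' hL.ne' (by positivity) hγ,
    error_div_rate_eq hT0.le hγ0.ne' (by positivity) hμ.ne', ← add_assoc] at hrate

/-- Convergence of FedRo under the Polyak-Łojasiewicz condition with an `(f,κ)`-robust
aggregator and stepsize `γ = 1/(c'LHT^{1-β})`, `c' = max(4√2, √(384κ))`: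
`ℓ_𝓗(w_T) - ℓ* ≤ exp(-μT^β/(8c'L))(ℓ_𝓗(w₀) - ℓ*) + G²/(2μT^{2-2β}) + 45κG²/μ`. -/
theorem stmt_19 (n d f : ℕ) (hn : 1 ≤ n) (hd : 1 ≤ d) (hf : 2 * f < n)
    (κ : ℝ) (hκ : 0 ≤ κ)
    (A : (Fin n → EuclideanSpace ℝ (Fin d)) → EuclideanSpace ℝ (Fin d))
    (hA : IsRobust n d f κ A)
    (𝓗 : Finset (Fin n)) (h𝓗 : 𝓗.card = n - f)
    (ℓ : Fin n → EuclideanSpace ℝ (Fin d) → ℝ) (L G : ℝ) (hL : 0 < L)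
    (hdiff : ∀ k ∈ 𝓗, Differentiable ℝ (ℓ k))
    (hsmooth : ∀ k ∈ 𝓗, ∀ w w' : EuclideanSpace ℝ (Fin d),
      ‖gradient (ℓ k) w' - gradient (ℓ k) w‖ ≤ L * ‖w' - w‖)
    (lH : EuclideanSpace ℝ (Fin d) → ℝ)
    (hlH : lH = fun w => (𝓗.card : ℝ)⁻¹ * ∑ k ∈ 𝓗, ℓ k w)
    (hbdd : BddBelow (Set.range lH))
    (lstar : ℝ) (hlstar : lstar = ⨅ w : EuclideanSpace ℝ (Fin d), lH w)
    (hhetero : ∀ w' : EuclideanSpace ℝ (Fin d),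
      (𝓗.card : ℝ)⁻¹ * ∑ k ∈ 𝓗, ‖gradient (ℓ k) w' - gradient lH w'‖ ^ 2 ≤ G ^ 2)
    (μ : ℝ) (hμ : 0 < μ)
    (hPL : ∀ w' : EuclideanSpace ℝ (Fin d),
      lH w' - lstar ≤ (1 / (2 * μ)) * ‖gradient lH w'‖ ^ 2)
    (H T : ℕ) (hH : 1 ≤ H) (hT : 1 ≤ T)
    (β : ℝ) (hβ : 0 < β) (hβ1 : β < 1)
    (c' : ℝ) (hc' : c' = max (4 * Real.sqrt 2) (Real.sqrt (384 * κ)))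
    (γ : ℝ) (hγ : γ = 1 / (c' * L * (H : ℝ) * (T : ℝ) ^ ((1 : ℝ) - β)))
    (w : ℕ → EuclideanSpace ℝ (Fin d))
    (v : ℕ → Fin n → ℕ → EuclideanSpace ℝ (Fin d))
    (u : ℕ → Fin n → EuclideanSpace ℝ (Fin d))
    (hv0 : ∀ t, ∀ k ∈ 𝓗, v t k 0 = w t)
    (hrec : ∀ t, ∀ k ∈ 𝓗, ∀ h : ℕ,
      v t k (h + 1) = v t k h - γ • gradient (ℓ k) (v t k h))
    (hu : ∀ t, ∀ k ∈ 𝓗, u t k = v t k H)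
    (hw : ∀ t, w (t + 1) = w t + A (fun k => u t k - w t)) :
    lH (w T) - lstar
      ≤ Real.exp (-(μ * (T : ℝ) ^ β) / (8 * c' * L)) * (lH (w 0) - lstar)
        + G ^ 2 / (2 * μ * (T : ℝ) ^ ((2 : ℝ) - 2 * β))
        + 45 * κ * G ^ 2 / μ :=
  stmt_19_general n d f hf κ hκ A hA 𝓗 h𝓗 ℓ L G hL hdiff hsmooth lH hlH hbdd lstar hlstar hhetero μ
    hμ hPL H T hH hT β hβ1 c' hc' γ hγ w v u hv0 hrec hu hw
end
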